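/- arXiv:2212.06325 — 3 statements merged into one kernel-verified Lean document; each statement's English description precedes it below -/
import Mathlib

section
/- Let F : ℝ^d → ℝ be differentiable with gradient ∇F. Suppose F is μ-strongly convex and ∇F is L-Lipschitz with 0 < μ ≤ L, and θ* is a point with ∇F(θ*) = 0. If the step size η satisfies 0 < η ≤ 2/(μ + L), then for every θ ∈ ℝ^d: ‖θ − η∇F(θ) − θ*‖ ≤ √(1 − 2ημL/(μ + L)) · ‖θ − θ*‖. -/
/-!
Subtracting `μ/2 ‖·‖²` turns `F` into a convex function with `(L - μ)`-Lipschitz gradient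
`∇F - μ • id`, and such a gradient is co-coercive. This gives
`‖∇F θ - ∇F θ'‖² + μ L ‖θ - θ'‖² ≤ (μ + L) ⟪∇F θ - ∇F θ', θ - θ'⟫`
(for `μ = L` directly from strong monotonicity and the Lipschitz bound). Expanding
`‖θ - θ* - η ∇F θ‖²` and using this with `θ' = θ*`, the `‖∇F θ‖²` terms carry the coefficient
`η (η (μ + L) - 2) ≤ 0`, and what remains is `(1 - 2ημL/(μ+L)) ‖θ - θ*‖²`.
-/

open RealInnerProductSpace

variable {E : Type*} [NormedAddCommGroup E] [InnerProductSpace ℝ E]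

def QuadraticLowerBound (f : E → ℝ) (g : E → E) (μ : ℝ) : Prop :=
  ∀ x y, f x + ⟪g x, y - x⟫ + μ / 2 * ‖y - x‖ ^ 2 ≤ f y

def QuadraticUpperBound (f : E → ℝ) (g : E → E) (L : ℝ) : Prop :=
  ∀ x y, f y ≤ f x + ⟪g x, y - x⟫ + L / 2 * ‖y - x‖ ^ 2

variable {f : E → ℝ} {g : E → E}

lemma HasGradientAt.hasDerivAt_add_smul [CompleteSpace E] {f' x u : E} (t : ℝ)
    (hf : HasGradientAt f f' (x + t • u)) :
    HasDerivAt (fun s : ℝ => f (x + s • u)) ⟪f', u⟫ t := by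
  have hline : HasDerivAt (fun s : ℝ => x + s • u) u t := by
    simpa using ((hasDerivAt_id t).smul_const u).const_add x
  have := hf.hasFDerivAt.comp_hasDerivAt t hline
  simp only [InnerProductSpace.toDual_apply_apply] at this
  exact this

lemma quadraticUpperBound_of_lipschitz [CompleteSpace E] {L : ℝ}
    (hf : ∀ x, HasGradientAt f (g x) x) (hlip : ∀ x y, ‖g x - g y‖ ≤ L * ‖x - y‖) :
    QuadraticUpperBound f g L := by
  intro x y
  set u := y - x
  let ψ : ℝ → ℝ := fun t => f (x + t • u) - t * ⟪g x, u⟫ - L / 2 * t ^ 2 * ‖u‖ ^ 2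
  have hψ : ∀ t, HasDerivAt ψ (⟪g (x + t • u) - g x, u⟫ - L * t * ‖u‖ ^ 2) t := by
    intro t
    refine ((((hf (x + t • u)).hasDerivAt_add_smul t).sub
      ((hasDerivAt_id t).mul_const ⟪g x, u⟫)).sub
      (((hasDerivAt_pow 2 t).const_mul (L / 2)).mul_const (‖u‖ ^ 2))).congr_deriv ?_
    rw [inner_sub_left]; ring
  have hψ_nonpos : ∀ t ∈ interior (Set.Ici (0 : ℝ)),
      ⟪g (x + t • u) - g x, u⟫ - L * t * ‖u‖ ^ 2 ≤ 0 := by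
    intro t ht
    rw [interior_Ici, Set.mem_Ioi] at ht
    rw [sub_nonpos]
    calc ⟪g (x + t • u) - g x, u⟫ ≤ ‖g (x + t • u) - g x‖ * ‖u‖ := real_inner_le_norm _ _
      _ ≤ L * ‖x + t • u - x‖ * ‖u‖ := by gcongr; exact hlip _ _
      _ = L * t * ‖u‖ ^ 2 := by
        rw [add_sub_cancel_left, norm_smul, Real.norm_of_nonneg ht.le]; ring
  have hanti := antitoneOn_of_hasDerivWithinAt_nonpos (convex_Ici 0)
    (fun t _ => (hψ t).continuousAt.continuousWithinAt)
    (fun t _ => (hψ t).hasDerivWithinAt) hψ_nonpos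
  have := hanti Set.self_mem_Ici (Set.mem_Ici.2 zero_le_one) zero_le_one
  simp only [ψ, u, zero_smul, one_smul, add_zero, add_sub_cancel] at this
  linarith

lemma sub_sub_inner_sub_smul_eq (f : E → ℝ) (g : E → E) (ν : ℝ) (x y : E) :
    (f y - ν / 2 * ‖y‖ ^ 2) - (f x - ν / 2 * ‖x‖ ^ 2) - ⟪g x - ν • x, y - x⟫ =
      f y - f x - ⟪g x, y - x⟫ - ν / 2 * ‖y - x‖ ^ 2 := by
  simp only [norm_sub_sq_real, inner_sub_left, inner_sub_right, real_inner_smul_left,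
    real_inner_self_eq_norm_sq, real_inner_comm x y]
  ring

lemma QuadraticLowerBound.sub_half_mul_sq_norm {μ : ℝ} (h : QuadraticLowerBound f g μ) (ν : ℝ) :
    QuadraticLowerBound (fun x => f x - ν / 2 * ‖x‖ ^ 2) (fun x => g x - ν • x) (μ - ν) := by
  intro x y
  linarith [h x y, sub_sub_inner_sub_smul_eq f g ν x y]

lemma QuadraticUpperBound.sub_half_mul_sq_norm {L : ℝ} (h : QuadraticUpperBound f g L) (ν : ℝ) :
    QuadraticUpperBound (fun x => f x - ν / 2 * ‖x‖ ^ 2) (fun x => g x - ν • x) (L - ν) := by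
  intro x y
  linarith [h x y, sub_sub_inner_sub_smul_eq f g ν x y]

lemma QuadraticLowerBound.mul_sq_norm_sub_le_inner {μ : ℝ} (h : QuadraticLowerBound f g μ)
    (x y : E) : μ * ‖x - y‖ ^ 2 ≤ ⟪g x - g y, x - y⟫ := by
  have hxy := h x y
  have hyx := h y x
  rw [norm_sub_rev] at hxy
  rw [inner_sub_left, ← neg_sub x y, inner_neg_right] at *
  linarith

lemma QuadraticUpperBound.add_inner_add_sq_norm_le {c : ℝ} (hup : QuadraticUpperBound f g c)
    (hlow : QuadraticLowerBound f g 0) (hc : 0 < c) (x y : E) :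
    f x + ⟪g x, y - x⟫ + 1 / (2 * c) * ‖g y - g x‖ ^ 2 ≤ f y := by
  set D := g y - g x
  -- the lower bound at `x` and the upper bound at `y`, both at the gradient step from `y`
  set z := y - c⁻¹ • D
  have hlow_z := hlow x z
  have hup_z := hup y z
  have hzx : z - x = (y - x) - c⁻¹ • D := by simp only [z]; abel
  have hzy : z - y = -(c⁻¹ • D) := by simp only [z]; abel
  have hD : c⁻¹ * ⟪g y, D⟫ - c⁻¹ * ⟪g x, D⟫ = c⁻¹ * ‖D‖ ^ 2 := by
    rw [← mul_sub, ← inner_sub_left, real_inner_self_eq_norm_sq]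
  rw [hzx, inner_sub_right, real_inner_smul_right, zero_div, zero_mul, add_zero] at hlow_z
  rw [hzy, inner_neg_right, real_inner_smul_right, norm_neg, norm_smul, mul_pow,
    Real.norm_eq_abs, sq_abs] at hup_z
  have hquad : c / 2 * (c⁻¹ ^ 2 * ‖D‖ ^ 2) = c⁻¹ * ‖D‖ ^ 2 - 1 / (2 * c) * ‖D‖ ^ 2 := by
    field_simp; ring
  linarith

lemma QuadraticUpperBound.sq_norm_sub_le_mul_inner {c : ℝ} (hup : QuadraticUpperBound f g c)
    (hlow : QuadraticLowerBound f g 0) (hc : 0 < c) (x y : E) :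
    ‖g x - g y‖ ^ 2 ≤ c * ⟪g x - g y, x - y⟫ := by
  have hxy := hup.add_inner_add_sq_norm_le hlow hc x y
  have hyx := hup.add_inner_add_sq_norm_le hlow hc y x
  rw [norm_sub_rev] at hxy
  have hsum : ⟪g x, y - x⟫ + ⟪g y, x - y⟫ = -⟪g x - g y, x - y⟫ := by
    rw [inner_sub_left, ← neg_sub x y, inner_neg_right]; ring
  have hinv : 1 / (2 * c) + 1 / (2 * c) = c⁻¹ := by field_simp; norm_num
  have h : c⁻¹ * ‖g x - g y‖ ^ 2 ≤ ⟪g x - g y, x - y⟫ := by nlinarith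
  calc ‖g x - g y‖ ^ 2 = c * (c⁻¹ * ‖g x - g y‖ ^ 2) := by field_simp
    _ ≤ c * ⟪g x - g y, x - y⟫ := by gcongr

lemma sq_norm_sub_add_mul_sq_norm_le_inner [CompleteSpace E] {μ L : ℝ}
    (hf : ∀ x, HasGradientAt f (g x) x) (hlow : QuadraticLowerBound f g μ)
    (hlip : ∀ x y, ‖g x - g y‖ ≤ L * ‖x - y‖) (hμ : 0 ≤ μ) (hμL : μ ≤ L) (x y : E) :
    ‖g x - g y‖ ^ 2 + μ * L * ‖x - y‖ ^ 2 ≤ (μ + L) * ⟪g x - g y, x - y⟫ := by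
  rcases hμL.eq_or_lt with rfl | hμL
  · have hmono := hlow.mul_sq_norm_sub_le_inner x y
    have hnorm : ‖g x - g y‖ ^ 2 ≤ (μ * ‖x - y‖) ^ 2 :=
      pow_le_pow_left₀ (norm_nonneg _) (hlip x y) 2
    nlinarith
  · have hup := quadraticUpperBound_of_lipschitz hf hlip
    have hco := (hup.sub_half_mul_sq_norm μ).sq_norm_sub_le_mul_inner
      (by simpa using hlow.sub_half_mul_sq_norm μ) (sub_pos.2 hμL) x y
    have hshift : g x - μ • x - (g y - μ • y) = (g x - g y) - μ • (x - y) := by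
      rw [smul_sub]; abel
    rw [hshift] at hco
    generalize g x - g y = a at hco ⊢
    generalize x - y = b at hco ⊢
    rw [norm_sub_sq_real, norm_smul, mul_pow, Real.norm_eq_abs, sq_abs, real_inner_smul_right,
      inner_sub_left, real_inner_smul_left, real_inner_self_eq_norm_sq] at hco
    nlinarith

lemma norm_sub_smul_le_sqrt_mul_norm {a b : E} {μ L η : ℝ}
    (hab : ‖a‖ ^ 2 + μ * L * ‖b‖ ^ 2 ≤ (μ + L) * ⟪a, b⟫) (hμL : 0 < μ + L) (hη0 : 0 ≤ η)
    (hη : η ≤ 2 / (μ + L)) :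
    ‖b - η • a‖ ≤ √(1 - 2 * η * μ * L / (μ + L)) * ‖b‖ := by
  have hη' : η * (μ + L) ≤ 2 := (le_div_iff₀ hμL).1 hη
  have hexpand : ‖b - η • a‖ ^ 2 = ‖b‖ ^ 2 - 2 * η * ⟪a, b⟫ + η ^ 2 * ‖a‖ ^ 2 := by
    rw [norm_sub_sq_real, real_inner_smul_right, norm_smul, mul_pow, Real.norm_eq_abs, sq_abs,
      real_inner_comm]
    ring
  have hsq : ‖b - η • a‖ ^ 2 ≤ (1 - 2 * η * μ * L / (μ + L)) * ‖b‖ ^ 2 := by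
    rw [one_sub_div hμL.ne', div_mul_eq_mul_div, le_div_iff₀ hμL, hexpand]
    nlinarith [mul_nonneg (mul_nonneg hη0 (sub_nonneg.2 hη')) (sq_nonneg ‖a‖)]
  calc ‖b - η • a‖ = √(‖b - η • a‖ ^ 2) := (Real.sqrt_sq (norm_nonneg _)).symm
    _ ≤ √((1 - 2 * η * μ * L / (μ + L)) * ‖b‖ ^ 2) := Real.sqrt_le_sqrt hsq
    _ = √(1 - 2 * η * μ * L / (μ + L)) * ‖b‖ := by
      rw [Real.sqrt_mul' _ (sq_nonneg _), Real.sqrt_sq (norm_nonneg _)]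

/-- Lemma 2 of the paper: one gradient-descent step on a `μ`-strongly convex function
with `L`-Lipschitz gradient contracts the distance to the minimizer `θ*` by the factor
`√(1 − 2ημL/(μ+L))`, provided `0 < η ≤ 2/(μ+L)`. -/
theorem gradient_step_contraction
    (d : ℕ) (F : EuclideanSpace ℝ (Fin d) → ℝ)
    (gradF : EuclideanSpace ℝ (Fin d) → EuclideanSpace ℝ (Fin d))
    (hdiff : ∀ θ, HasGradientAt F (gradF θ) θ)
    (μ L : ℝ) (hμ : 0 < μ) (hμL : μ ≤ L)
    (hstrong : ∀ θ θ' : EuclideanSpace ℝ (Fin d),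
      F θ + ⟪gradF θ, θ' - θ⟫ + μ / 2 * ‖θ' - θ‖ ^ 2 ≤ F θ')
    (hlip : ∀ θ θ' : EuclideanSpace ℝ (Fin d),
      ‖gradF θ - gradF θ'‖ ≤ L * ‖θ - θ'‖)
    (θstar : EuclideanSpace ℝ (Fin d)) (hθstar : gradF θstar = 0)
    (η : ℝ) (hη0 : 0 < η) (hη : η ≤ 2 / (μ + L))
    (θ : EuclideanSpace ℝ (Fin d)) :
    ‖θ - η • gradF θ - θstar‖ ≤
      Real.sqrt (1 - 2 * η * μ * L / (μ + L)) * ‖θ - θstar‖ := by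
  have hcoercive := sq_norm_sub_add_mul_sq_norm_le_inner hdiff hstrong hlip hμ.le hμL θ θstar
  rw [hθstar, sub_zero] at hcoercive
  rw [sub_right_comm]
  exact norm_sub_smul_le_sqrt_mul_norm hcoercive (by linarith) hη0.le hη
end

section
/- Let F : ℝ^d → ℝ be differentiable with gradient ∇F, μ-strongly convex with L-Lipschitz gradient (0 < μ ≤ L), and let θ* satisfy ∇F(θ*) = 0. Let λ > 0, Λ ≥ 0, Γ ≥ 0, and 0 < η ≤ 2/(μ + L). Let θ ∈ ℝ^d and let ḡ ∈ ℝ^d satisfy ‖ḡ − ∇F(θ)‖ ≤ 8Λ‖θ − θ*‖ + 4Γ. If g ∈ ℝ^d satisfies the acceptance criterion ‖g − ḡ‖ ≤ λ‖ḡ‖, then the next iterate θ⁺ = θ − ηg satisfies ‖θ⁺ − θ*‖ ≤ (√(1 − 2ημL/(μ + L)) + ηLλ + 8ηΛ(λ + 1)) · ‖θ − θ*‖ + 4ηΓ(λ + 1). -/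
open RealInnerProductSpace

/-! The gradient of a `μ`-strongly convex function with `L`-Lipschitz gradient satisfies
`μL‖x - y‖² + ‖∇F x - ∇F y‖² ≤ (μ + L)⟪∇F x - ∇F y, x - y⟫`, which is the co-coercivity of the
gradient of the convex, `(L - μ)`-smooth function `F - (μ/2)‖·‖²` rewritten in terms of `F`.
Taken at `(θ, θ*)` it makes the exact gradient step `θ - η∇F(θ)` a contraction towards `θ*` by
the factor `√(1 - 2ημL/(μ + L))` whenever `η ≤ 2/(μ + L)`. The accepted update differs from
`∇F(θ)` by at most `‖g - ḡ‖ + ‖ḡ - ∇F(θ)‖ ≤ λ(L‖θ - θ*‖ + e) + e`, where `e` is the error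
bound of the server update, and the triangle inequality adds `η` times this to the contraction. -/

section GradientInequalities

variable {E : Type*} [NormedAddCommGroup E] [InnerProductSpace ℝ E]

theorem HasGradientAt.hasDerivAt_comp_add_smul [CompleteSpace E] {f : E → ℝ} {g x v : E} {t : ℝ}
    (hf : HasGradientAt f g (x + t • v)) :
    HasDerivAt (fun s : ℝ => f (x + s • v)) ⟪g, v⟫ t := by
  have hline : HasDerivAt (fun s : ℝ => x + s • v) v t := by
    simpa using ((hasDerivAt_id t).smul_const v).const_add x
  simpa [InnerProductSpace.toDual_apply_apply, Function.comp_def] using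
    hf.hasFDerivAt.comp_hasDerivAt t hline

theorem le_add_inner_add_of_gradient_lipschitz [CompleteSpace E] {f : E → ℝ} {f' : E → E}
    {K : ℝ} (hf : ∀ x, HasGradientAt f (f' x) x) (hf' : ∀ x y, ‖f' x - f' y‖ ≤ K * ‖x - y‖)
    (x y : E) :
    f y ≤ f x + ⟪f' x, y - x⟫ + K / 2 * ‖y - x‖ ^ 2 := by
  set v := y - x
  -- `φ` is antitone on `[0, 1]` because `f'` grows at most linearly along the segment.
  set φ : ℝ → ℝ := fun t => f (x + t • v) - t * ⟪f' x, v⟫ - K / 2 * t ^ 2 * ‖v‖ ^ 2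
  have hφ : ∀ t, HasDerivAt φ (⟪f' (x + t • v), v⟫ - ⟪f' x, v⟫ - K * t * ‖v‖ ^ 2) t := by
    intro t
    refine (((hf _).hasDerivAt_comp_add_smul.sub ((hasDerivAt_id t).mul_const _)).sub
      (((hasDerivAt_pow 2 t).const_mul (K / 2)).mul_const _)).congr_deriv ?_
    simp only [Nat.cast_ofNat]
    ring
  have hanti : AntitoneOn φ (Set.Icc 0 1) := by
    refine antitoneOn_of_deriv_nonpos (convex_Icc 0 1)
      (fun t _ => (hφ t).continuousAt.continuousWithinAt)
      (fun t _ => (hφ t).differentiableAt.differentiableWithinAt) fun t ht => ?_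
    rw [interior_Icc] at ht
    rw [(hφ t).deriv, ← inner_sub_left]
    have hlip : ‖f' (x + t • v) - f' x‖ ≤ K * t * ‖v‖ := by
      simpa [norm_smul, abs_of_pos ht.1, mul_assoc] using hf' (x + t • v) x
    calc ⟪f' (x + t • v) - f' x, v⟫ - K * t * ‖v‖ ^ 2
        ≤ ‖f' (x + t • v) - f' x‖ * ‖v‖ - K * t * ‖v‖ ^ 2 := by gcongr; exact real_inner_le_norm _ _
      _ ≤ K * t * ‖v‖ * ‖v‖ - K * t * ‖v‖ ^ 2 := by gcongr
      _ = 0 := by ring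
  have h01 := hanti (Set.left_mem_Icc.2 zero_le_one) (Set.right_mem_Icc.2 zero_le_one) zero_le_one
  simp only [φ, zero_smul, add_zero, one_smul, zero_mul, sub_zero, one_mul, one_pow, mul_one,
    ne_eq, OfNat.ofNat_ne_zero, not_false_eq_true, zero_pow, mul_zero] at h01
  rw [add_sub_cancel] at h01
  linarith

theorem add_inner_add_norm_sq_le_of_quadratic_bounds {f : E → ℝ} {f' : E → E} {K : ℝ}
    (hK : 0 < K) (hlow : ∀ x y, f x + ⟪f' x, y - x⟫ ≤ f y)
    (hup : ∀ x y, f y ≤ f x + ⟪f' x, y - x⟫ + K / 2 * ‖y - x‖ ^ 2) (x y : E) :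
    f x + ⟪f' x, y - x⟫ + 1 / (2 * K) * ‖f' y - f' x‖ ^ 2 ≤ f y := by
  -- Compare the lower bound at `x` with the upper bound at `y`, both evaluated at the
  -- point `z` that minimises the upper bound at `y`.
  set D := f' y - f' x
  set z := y - K⁻¹ • D
  have h1 := hlow x z
  have h2 := hup y z
  have hzy : z - y = -(K⁻¹ • D) := by simp only [z]; abel
  have hzx : z - x = (y - x) - K⁻¹ • D := by simp only [z]; abel
  rw [hzx, inner_sub_right, real_inner_smul_right] at h1
  rw [hzy, inner_neg_right, real_inner_smul_right, norm_neg, norm_smul, Real.norm_eq_abs,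
    abs_of_pos (inv_pos.2 hK)] at h2
  have hD : K⁻¹ * ⟪f' y, D⟫ - K⁻¹ * ⟪f' x, D⟫ = K⁻¹ * ‖D‖ ^ 2 := by
    rw [← mul_sub, ← inner_sub_left, real_inner_self_eq_norm_sq]
  have hK' : K / 2 * (K⁻¹ * ‖D‖) ^ 2 = 1 / (2 * K) * ‖D‖ ^ 2 := by field_simp
  have hK'' : K⁻¹ * ‖D‖ ^ 2 = 2 * (1 / (2 * K) * ‖D‖ ^ 2) := by field_simp
  linarith

theorem norm_sub_sq_le_mul_inner_of_quadratic_bounds {f : E → ℝ} {f' : E → E} {K : ℝ}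
    (hK : 0 < K) (hlow : ∀ x y, f x + ⟪f' x, y - x⟫ ≤ f y)
    (hup : ∀ x y, f y ≤ f x + ⟪f' x, y - x⟫ + K / 2 * ‖y - x‖ ^ 2) (x y : E) :
    ‖f' x - f' y‖ ^ 2 ≤ K * ⟪f' x - f' y, x - y⟫ := by
  have h1 := add_inner_add_norm_sq_le_of_quadratic_bounds hK hlow hup x y
  have h2 := add_inner_add_norm_sq_le_of_quadratic_bounds hK hlow hup y x
  rw [norm_sub_rev] at h1
  have hinner : ⟪f' x - f' y, x - y⟫ = -⟪f' x, y - x⟫ - ⟪f' y, x - y⟫ := by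
    rw [inner_sub_left, ← neg_sub x y, inner_neg_right]
    ring
  have hK' : 1 / K * ‖f' x - f' y‖ ^ 2 ≤ ⟪f' x - f' y, x - y⟫ := by
    have : 1 / K * ‖f' x - f' y‖ ^ 2 = 2 * (1 / (2 * K) * ‖f' x - f' y‖ ^ 2) := by field_simp
    linarith
  rwa [one_div_mul_eq_div, div_le_iff₀ hK, mul_comm] at hK'

theorem mul_norm_sq_add_norm_sq_le_inner_of_strongly_convex [CompleteSpace E] {f : E → ℝ}
    {f' : E → E} {μ L : ℝ} (hf : ∀ x, HasGradientAt f (f' x) x) (hμ : 0 < μ) (hμL : μ ≤ L)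
    (hstrong : ∀ x y, f x + ⟪f' x, y - x⟫ + μ / 2 * ‖y - x‖ ^ 2 ≤ f y)
    (hlip : ∀ x y, ‖f' x - f' y‖ ≤ L * ‖x - y‖) (x y : E) :
    μ * L * ‖x - y‖ ^ 2 + ‖f' x - f' y‖ ^ 2 ≤ (μ + L) * ⟪f' x - f' y, x - y⟫ := by
  rcases hμL.eq_or_lt with rfl | hlt
  · have hmono : μ * ‖x - y‖ ^ 2 ≤ ⟪f' x - f' y, x - y⟫ := by
      have hinner : ⟪f' x - f' y, x - y⟫ = -⟪f' x, y - x⟫ - ⟪f' y, x - y⟫ := by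
        rw [inner_sub_left, ← neg_sub x y, inner_neg_right]
        ring
      have h1 := hstrong x y
      have h2 := hstrong y x
      rw [norm_sub_rev] at h1
      linarith
    have hsq : ‖f' x - f' y‖ ^ 2 ≤ (μ * ‖x - y‖) ^ 2 := by
      gcongr
      exact hlip x y
    nlinarith
  -- `f - (μ/2)‖·‖²` is convex and `(L - μ)`-smooth, so its gradient is co-coercive.
  have hsq : ∀ a b : E, ‖b‖ ^ 2 = ‖a‖ ^ 2 + 2 * ⟪a, b - a⟫ + ‖b - a‖ ^ 2 := fun a b => by
    rw [← norm_add_sq_real, add_sub_cancel]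
  have hshift : ∀ a b : E,
      ⟪f' a - μ • a, b - a⟫ = ⟪f' a, b - a⟫ - μ * ⟪a, b - a⟫ := fun a b => by
    rw [inner_sub_left, real_inner_smul_left]
  have hco := norm_sub_sq_le_mul_inner_of_quadratic_bounds (f := fun z => f z - μ / 2 * ‖z‖ ^ 2)
    (f' := fun z => f' z - μ • z) (sub_pos.2 hlt)
    (fun a b => by
      simp only [hshift]
      linear_combination hstrong a b + μ / 2 * hsq a b)
    (fun a b => by
      simp only [hshift]
      linear_combination le_add_inner_add_of_gradient_lipschitz hf hlip a b - μ / 2 * hsq a b) x y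
  have hD : f' x - μ • x - (f' y - μ • y) = (f' x - f' y) - μ • (x - y) := by module
  rw [hD, norm_sub_sq_real, inner_sub_left _ (μ • (x - y)), real_inner_smul_left,
    real_inner_smul_right, norm_smul, Real.norm_of_nonneg hμ.le, real_inner_self_eq_norm_sq] at hco
  linear_combination hco

theorem norm_sub_smul_le_sqrt_mul_of_coercive {u g : E} {μ L η : ℝ} (hμL : 0 < μ + L)
    (hη0 : 0 ≤ η) (hη : η ≤ 2 / (μ + L))
    (hc : μ * L * ‖u‖ ^ 2 + ‖g‖ ^ 2 ≤ (μ + L) * ⟪g, u⟫) :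
    ‖u - η • g‖ ≤ Real.sqrt (1 - 2 * η * μ * L / (μ + L)) * ‖u‖ := by
  have hη' : η * (μ + L) ≤ 2 := (le_div_iff₀ hμL).1 hη
  have hsq : ‖u - η • g‖ ^ 2 ≤ (1 - 2 * η * μ * L / (μ + L)) * ‖u‖ ^ 2 := by
    rw [norm_sub_sq_real, real_inner_smul_right, norm_smul, Real.norm_of_nonneg hη0,
      real_inner_comm, ← mul_le_mul_iff_right₀ hμL]
    have hrhs : (μ + L) * ((1 - 2 * η * μ * L / (μ + L)) * ‖u‖ ^ 2)
        = (μ + L) * ‖u‖ ^ 2 - 2 * η * (μ * L * ‖u‖ ^ 2) := by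
      field_simp
    rw [hrhs]
    nlinarith [mul_le_mul_of_nonneg_left hc hη0, mul_le_mul_of_nonneg_right hη'
      (mul_nonneg hη0 (sq_nonneg ‖g‖))]
  calc ‖u - η • g‖ = Real.sqrt (‖u - η • g‖ ^ 2) := (Real.sqrt_sq (norm_nonneg _)).symm
    _ ≤ Real.sqrt ((1 - 2 * η * μ * L / (μ + L)) * ‖u‖ ^ 2) := Real.sqrt_le_sqrt hsq
    _ = Real.sqrt (1 - 2 * η * μ * L / (μ + L)) * ‖u‖ := by
      rw [Real.sqrt_mul' _ (sq_nonneg _), Real.sqrt_sq (norm_nonneg _)]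

end GradientInequalities

theorem norm_sub_le_of_norm_sub_le_mul_norm {E : Type*} [SeminormedAddCommGroup E]
    {G gbar g : E} {R e lam : ℝ} (hlam : 0 ≤ lam) (hG : ‖G‖ ≤ R) (hgbar : ‖gbar - G‖ ≤ e)
    (haccept : ‖g - gbar‖ ≤ lam * ‖gbar‖) :
    ‖g - G‖ ≤ lam * (R + e) + e := by
  have hgbar' : ‖gbar‖ ≤ R + e := by
    linarith [norm_le_norm_add_norm_sub' gbar G]
  calc ‖g - G‖ ≤ ‖g - gbar‖ + ‖gbar - G‖ := norm_sub_le_norm_sub_add_norm_sub _ _ _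
    _ ≤ lam * (R + e) + e := by gcongr; exact haccept.trans (by gcongr)

theorem aflguard_one_step_contraction_general
    (d : ℕ) (F : EuclideanSpace ℝ (Fin d) → ℝ)
    (gradF : EuclideanSpace ℝ (Fin d) → EuclideanSpace ℝ (Fin d))
    (hdiff : ∀ θ, HasGradientAt F (gradF θ) θ)
    (μ L : ℝ) (hμ : 0 < μ) (hμL : μ ≤ L)
    (hstrong : ∀ θ θ' : EuclideanSpace ℝ (Fin d),
      F θ + ⟪gradF θ, θ' - θ⟫ + μ / 2 * ‖θ' - θ‖ ^ 2 ≤ F θ')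
    (hlip : ∀ θ θ' : EuclideanSpace ℝ (Fin d),
      ‖gradF θ - gradF θ'‖ ≤ L * ‖θ - θ'‖)
    (θstar : EuclideanSpace ℝ (Fin d)) (hθstar : gradF θstar = 0)
    (lam Lambda Gamma : ℝ) (hlam : 0 < lam)
    (η : ℝ) (hη0 : 0 < η) (hη : η ≤ 2 / (μ + L))
    (θ gbar g : EuclideanSpace ℝ (Fin d))
    (hgbar : ‖gbar - gradF θ‖ ≤ 8 * Lambda * ‖θ - θstar‖ + 4 * Gamma)
    (haccept : ‖g - gbar‖ ≤ lam * ‖gbar‖) :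
    ‖θ - η • g - θstar‖ ≤
      (Real.sqrt (1 - 2 * η * μ * L / (μ + L)) + η * L * lam + 8 * η * Lambda * (lam + 1))
        * ‖θ - θstar‖ + 4 * η * Gamma * (lam + 1) := by
  have hcoercive := mul_norm_sq_add_norm_sq_le_inner_of_strongly_convex hdiff hμ hμL hstrong
    hlip θ θstar
  rw [hθstar, sub_zero] at hcoercive
  have hgrad_step := norm_sub_smul_le_sqrt_mul_of_coercive (by linarith) hη0.le hη hcoercive
  have hgrad : ‖gradF θ‖ ≤ L * ‖θ - θstar‖ := by simpa [hθstar] using hlip θ θstar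
  have herror := norm_sub_le_of_norm_sub_le_mul_norm hlam.le hgrad hgbar haccept
  calc ‖θ - η • g - θstar‖ = ‖(θ - θstar - η • gradF θ) - η • (g - gradF θ)‖ := by
        congr 1; module
    _ ≤ ‖θ - θstar - η • gradF θ‖ + η * ‖g - gradF θ‖ :=
        (norm_sub_le _ _).trans_eq (by rw [norm_smul, Real.norm_of_nonneg hη0.le])
    _ ≤ Real.sqrt (1 - 2 * η * μ * L / (μ + L)) * ‖θ - θstar‖
        + η * (lam * (L * ‖θ - θstar‖ + (8 * Lambda * ‖θ - θstar‖ + 4 * Gamma))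
          + (8 * Lambda * ‖θ - θstar‖ + 4 * Gamma)) := by gcongr
    _ = _ := by ring

/-- Per-iteration contraction estimate from the proof of Theorem 1 of the paper:
if the server model update `gbar` satisfies `‖gbar − ∇F(θ)‖ ≤ 8Λ‖θ − θ*‖ + 4Γ` and the
accepted (possibly adversarial) client update `g` satisfies the AFLGuard acceptance
criterion `‖g − gbar‖ ≤ λ‖gbar‖`, then the next iterate `θ⁺ = θ − ηg` satisfies
`‖θ⁺ − θ*‖ ≤ (√(1 − 2ημL/(μ+L)) + ηLλ + 8ηΛ(λ+1))‖θ − θ*‖ + 4ηΓ(λ+1)`. -/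
theorem aflguard_one_step_contraction
    (d : ℕ) (F : EuclideanSpace ℝ (Fin d) → ℝ)
    (gradF : EuclideanSpace ℝ (Fin d) → EuclideanSpace ℝ (Fin d))
    (hdiff : ∀ θ, HasGradientAt F (gradF θ) θ)
    (μ L : ℝ) (hμ : 0 < μ) (hμL : μ ≤ L)
    (hstrong : ∀ θ θ' : EuclideanSpace ℝ (Fin d),
      F θ + ⟪gradF θ, θ' - θ⟫ + μ / 2 * ‖θ' - θ‖ ^ 2 ≤ F θ')
    (hlip : ∀ θ θ' : EuclideanSpace ℝ (Fin d),
      ‖gradF θ - gradF θ'‖ ≤ L * ‖θ - θ'‖)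
    (θstar : EuclideanSpace ℝ (Fin d)) (hθstar : gradF θstar = 0)
    (lam Lambda Gamma : ℝ) (hlam : 0 < lam) (hLambda : 0 ≤ Lambda) (hGamma : 0 ≤ Gamma)
    (η : ℝ) (hη0 : 0 < η) (hη : η ≤ 2 / (μ + L))
    (θ gbar g : EuclideanSpace ℝ (Fin d))
    (hgbar : ‖gbar - gradF θ‖ ≤ 8 * Lambda * ‖θ - θstar‖ + 4 * Gamma)
    (haccept : ‖g - gbar‖ ≤ lam * ‖gbar‖) :
    ‖θ - η • g - θstar‖ ≤
      (Real.sqrt (1 - 2 * η * μ * L / (μ + L)) + η * L * lam + 8 * η * Lambda * (lam + 1))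
        * ‖θ - θstar‖ + 4 * η * Gamma * (lam + 1) :=
  aflguard_one_step_contraction_general d F gradF hdiff μ L hμ hμL hstrong hlip θstar hθstar lam
    Lambda Gamma hlam η hη0 hη θ gbar g hgbar haccept
end

section
/- (Lemma 1, part (iii): the linear regression model satisfies Assumption 3 with α₂ = √8, ρ₂ = 8.) Let u be a standard Gaussian random vector on ℝ^d, let v ∈ ℝ^d be a unit vector, and let w ∈ ℝ^d with w ≠ 0. Then for every φ ∈ ℝ with φ² ≤ 1/(64‖w‖²): E[exp(φ · (⟨u, w⟩⟨u, v⟩ − ⟨w, v⟩))] ≤ exp(4φ²‖w‖²). -/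
/-!
Since `‖v‖ = 1`, the vectors `a = w + ‖w‖ • v` and `b = w - ‖w‖ • v` are orthogonal with
`‖a‖² + ‖b‖² = 4‖w‖²`, and polarization writes `φ (⟪u, w⟫⟪u, v⟫ - ⟪w, v⟫)` as
`c (⟪a, u⟫² - ‖a‖²) - c (⟪b, u⟫² - ‖b‖²)` with `c = φ / (4‖w‖)`. For a standard Gaussian `u`,
the projections `⟪a, u⟫ ~ N(0, ‖a‖²)` and `⟪b, u⟫ ~ N(0, ‖b‖²)` are uncorrelated, hence
independent, so the expectation factors into two exact centred chi-square moment generating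
functions `e^{-y} / √(1 - 2y)` (`y = c‖a‖²` resp. `-c‖b‖²`), each at most `exp (4 y²)` when
`y ≤ 1/4`.
-/

open MeasureTheory ProbabilityTheory RealInnerProductSpace
open Real
open scoped NNReal

lemma exp_neg_le_sqrt_one_sub_mul_exp_sq {x : ℝ} (hx : x ≤ 1 / 4) :
    exp (-x) ≤ √(1 - 2 * x) * exp (4 * x ^ 2) := by
  have hpos : 0 < 1 + (2 * x + 8 * x ^ 2) := by nlinarith [sq_nonneg (4 * x + 1)]
  have hsq : exp (-x - 4 * x ^ 2) ^ 2 ≤ 1 - 2 * x :=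
    calc exp (-x - 4 * x ^ 2) ^ 2 = (exp (2 * x + 8 * x ^ 2))⁻¹ := by
          rw [sq, ← exp_add, ← exp_neg]; ring_nf
      _ ≤ (1 + (2 * x + 8 * x ^ 2))⁻¹ :=
          inv_anti₀ hpos (by linarith [add_one_le_exp (2 * x + 8 * x ^ 2)])
      _ ≤ 1 - 2 * x := by
          -- `(1 + 2x + 8x²)(1 - 2x) = 1 + 4x²(1 - 4x)`
          rw [inv_le_iff_one_le_mul₀ hpos]; nlinarith [sq_nonneg x]
  calc exp (-x) = exp (-x - 4 * x ^ 2) * exp (4 * x ^ 2) := by rw [← exp_add]; ring_nf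
    _ ≤ √(1 - 2 * x) * exp (4 * x ^ 2) := by
        gcongr
        exact le_sqrt_of_sq_le hsq

lemma integral_exp_mul_sq_gaussianReal {v : ℝ≥0} {c : ℝ} (hc : 2 * c * v < 1) :
    ∫ x, exp (c * x ^ 2) ∂gaussianReal 0 v = (√(1 - 2 * c * v))⁻¹ := by
  rcases eq_or_ne v 0 with rfl | hv
  · simp [gaussianReal_zero_var]
  have hv' : (0 : ℝ) < v := by positivity
  have hb : 0 < (1 - 2 * c * v) / (2 * v) := by apply div_pos <;> linarith
  have hpdf : ∀ x, gaussianPDFReal 0 v x • exp (c * x ^ 2)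
      = (√(2 * π * v))⁻¹ * exp (-((1 - 2 * c * v) / (2 * v)) * x ^ 2) := by
    intro x
    rw [gaussianPDFReal, smul_eq_mul, mul_assoc, ← exp_add]
    congr 2
    field_simp
    ring
  rw [integral_gaussianReal_eq_integral_smul hv]
  simp_rw [hpdf]
  rw [integral_const_mul, integral_gaussian, ← Real.sqrt_inv, ← Real.sqrt_inv,
    ← Real.sqrt_mul (by positivity)]
  congr 1
  field_simp

lemma integral_exp_mul_sq_sub_gaussianReal_le {v : ℝ≥0} {c : ℝ} (hc : c * v ≤ 1 / 4) :
    ∫ x, exp (c * (x ^ 2 - v)) ∂gaussianReal 0 v ≤ exp (4 * (c * v) ^ 2) := by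
  have hsqrt : 0 < √(1 - 2 * c * v) := sqrt_pos.mpr (by linarith)
  calc ∫ x, exp (c * (x ^ 2 - v)) ∂gaussianReal 0 v
      = exp (-(c * v)) * ∫ x, exp (c * x ^ 2) ∂gaussianReal 0 v := by
        rw [← integral_const_mul]
        congr with x
        rw [← exp_add]
        ring_nf
    _ = exp (-(c * v)) / √(1 - 2 * c * v) := by
        rw [integral_exp_mul_sq_gaussianReal (by linarith), div_eq_mul_inv]
    _ ≤ exp (4 * (c * v) ^ 2) := by
        rw [div_le_iff₀ hsqrt, mul_comm (exp _), mul_assoc 2]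
        exact exp_neg_le_sqrt_one_sub_mul_exp_sq hc

lemma four_mul_inner_mul_inner_sub_inner {E : Type*} [NormedAddCommGroup E]
    [InnerProductSpace ℝ E] (x w v : E) (r : ℝ) :
    4 * r * (⟪x, w⟫ * ⟪x, v⟫ - ⟪w, v⟫)
      = (⟪w + r • v, x⟫ ^ 2 - ‖w + r • v‖ ^ 2) - (⟪w - r • v, x⟫ ^ 2 - ‖w - r • v‖ ^ 2) := by
  simp only [inner_add_left, inner_sub_left, real_inner_smul_left, norm_add_sq_real,
    norm_sub_sq_real, real_inner_smul_right]
  rw [real_inner_comm w x, real_inner_comm v x]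
  ring

section stdGaussian

variable {E : Type*} [NormedAddCommGroup E] [InnerProductSpace ℝ E] [FiniteDimensional ℝ E]
  [MeasurableSpace E] [BorelSpace E]

lemma stdGaussian_map_inner (a : E) :
    (stdGaussian E).map (fun x ↦ ⟪a, x⟫) = gaussianReal 0 (‖a‖₊ ^ 2) := by
  have h := IsGaussian.map_eq_gaussianReal (μ := stdGaussian E) (innerSL ℝ a)
  rw [integral_strongDual_stdGaussian, variance_dual_stdGaussian, innerSL_apply_norm,
    ← coe_nnnorm, ← NNReal.coe_pow, Real.toNNReal_coe] at h
  rw [← h]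
  rfl

lemma integral_exp_mul_sq_inner_sub_stdGaussian_le (a : E) {c : ℝ}
    (hc : c * ‖a‖ ^ 2 ≤ 1 / 4) :
    ∫ x, exp (c * (⟪a, x⟫ ^ 2 - ‖a‖ ^ 2)) ∂stdGaussian E ≤ exp (4 * (c * ‖a‖ ^ 2) ^ 2) := by
  have h := integral_exp_mul_sq_sub_gaussianReal_le (v := ‖a‖₊ ^ 2) (c := c) (by simpa using hc)
  rw [← stdGaussian_map_inner, integral_map (by fun_prop) (by fun_prop)] at h
  simpa using h

lemma indepFun_inner_stdGaussian {a b : E} (hab : ⟪a, b⟫ = 0) :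
    IndepFun (fun x ↦ ⟪a, x⟫) (fun x ↦ ⟪b, x⟫) (stdGaussian E) := by
  refine HasGaussianLaw.indepFun_of_covariance_eq_zero ?_ ?_
  · exact IsGaussian.hasGaussianLaw_id.map_fun ((innerSL ℝ a).prod (innerSL ℝ b))
  · rw [← covarianceBilin_apply_eq_cov IsGaussian.memLp_two_id, covarianceBilin_stdGaussian,
      innerSL_apply_apply, hab]

lemma integral_exp_sq_inner_add_sq_inner_stdGaussian_le {a b : E} (hab : ⟪a, b⟫ = 0)
    {c₁ c₂ : ℝ} (h₁ : c₁ * ‖a‖ ^ 2 ≤ 1 / 4) (h₂ : c₂ * ‖b‖ ^ 2 ≤ 1 / 4) :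
    ∫ x, exp (c₁ * (⟪a, x⟫ ^ 2 - ‖a‖ ^ 2) + c₂ * (⟪b, x⟫ ^ 2 - ‖b‖ ^ 2)) ∂stdGaussian E
      ≤ exp (4 * ((c₁ * ‖a‖ ^ 2) ^ 2 + (c₂ * ‖b‖ ^ 2) ^ 2)) := by
  have hindep : IndepFun (fun x ↦ exp (c₁ * (⟪a, x⟫ ^ 2 - ‖a‖ ^ 2)))
      (fun x ↦ exp (c₂ * (⟪b, x⟫ ^ 2 - ‖b‖ ^ 2))) (stdGaussian E) :=
    (indepFun_inner_stdGaussian hab).comp (φ := fun y ↦ exp (c₁ * (y ^ 2 - ‖a‖ ^ 2)))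
      (ψ := fun y ↦ exp (c₂ * (y ^ 2 - ‖b‖ ^ 2))) (by fun_prop) (by fun_prop)
  simp_rw [exp_add]
  rw [hindep.integral_fun_mul_eq_mul_integral (by fun_prop) (by fun_prop), mul_add, exp_add]
  exact mul_le_mul (integral_exp_mul_sq_inner_sub_stdGaussian_le a h₁)
    (integral_exp_mul_sq_inner_sub_stdGaussian_le b h₂) (integral_nonneg fun _ ↦ (exp_pos _).le)
    (exp_pos _).le

lemma integral_exp_mul_inner_mul_inner_sub_stdGaussian_le {v w : E} (hv : ‖v‖ = 1)
    (hw : w ≠ 0) {φ : ℝ} (hφ : |φ| * ‖w‖ ≤ 1 / 4) :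
    ∫ x, exp (φ * (⟪x, w⟫ * ⟪x, v⟫ - ⟪w, v⟫)) ∂stdGaussian E ≤ exp (4 * φ ^ 2 * ‖w‖ ^ 2) := by
  have hs : 0 < ‖w‖ := norm_pos_iff.mpr hw
  set a := w + ‖w‖ • v
  set b := w - ‖w‖ • v
  set c := φ / (4 * ‖w‖) with hc_def
  have hab : ⟪a, b⟫ = 0 := by
    rw [real_inner_add_sub_eq_zero_iff, norm_smul, norm_norm, hv, mul_one]
  have hab_norm : ‖a‖ ^ 2 + ‖b‖ ^ 2 = 4 * ‖w‖ ^ 2 := by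
    rw [norm_add_sq_real, norm_sub_sq_real, norm_smul, norm_norm, hv]
    ring
  have hcw : |c| * (4 * ‖w‖ ^ 2) = |φ| * ‖w‖ := by
    rw [hc_def, abs_div, abs_of_pos (by positivity : (0 : ℝ) < 4 * ‖w‖)]
    field_simp
  calc ∫ x, exp (φ * (⟪x, w⟫ * ⟪x, v⟫ - ⟪w, v⟫)) ∂stdGaussian E
      = ∫ x, exp (c * (⟪a, x⟫ ^ 2 - ‖a‖ ^ 2) + -c * (⟪b, x⟫ ^ 2 - ‖b‖ ^ 2)) ∂stdGaussian E := by
        congr with x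
        rw [neg_mul, ← sub_eq_add_neg, ← mul_sub, ← four_mul_inner_mul_inner_sub_inner, hc_def]
        field_simp
    _ ≤ exp (4 * ((c * ‖a‖ ^ 2) ^ 2 + (-c * ‖b‖ ^ 2) ^ 2)) := by
        refine integral_exp_sq_inner_add_sq_inner_stdGaussian_le hab ?_ ?_ <;>
          nlinarith [neg_abs_le c, le_abs_self c, sq_nonneg ‖a‖, sq_nonneg ‖b‖]
    _ ≤ exp (4 * φ ^ 2 * ‖w‖ ^ 2) := by
        have h : (c * ‖a‖ ^ 2) ^ 2 + (-c * ‖b‖ ^ 2) ^ 2 ≤ (|c| * (‖a‖ ^ 2 + ‖b‖ ^ 2)) ^ 2 := by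
          rw [mul_pow |c|, sq_abs]
          nlinarith [mul_nonneg (sq_nonneg c) (mul_nonneg (sq_nonneg ‖a‖) (sq_nonneg ‖b‖))]
        rw [hab_norm, hcw, mul_pow |φ|, sq_abs] at h
        exact exp_le_exp.mpr (by linarith)

end stdGaussian

lemma hasLaw_stdGaussian_of_iIndepFun {Ω ι : Type*} [MeasurableSpace Ω] {P : Measure Ω}
    [Fintype ι] {u : Ω → EuclideanSpace ℝ ι} (hu : Measurable u)
    (hcoord : ∀ i, P.map (fun ω ↦ u ω i) = gaussianReal 0 1)
    (hindep : iIndepFun (fun i ω ↦ u ω i) P) :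
    HasLaw u (stdGaussian (EuclideanSpace ℝ ι)) P :=
  HasLaw.comp (Y := WithLp.toLp 2) (X := fun ω i ↦ u ω i) ⟨by fun_prop, map_pi_eq_stdGaussian⟩
    (hindep.hasLaw_pi fun i ↦ ⟨by fun_prop, hcoord i⟩)

/-- Lemma 1, part (iii) of the paper: for a standard Gaussian vector `u` on `ℝ^d`
(coordinates i.i.d. `N(0,1)`), a unit vector `v`, and `w ≠ 0`, one has for every `φ`
with `φ² ≤ 1/(64‖w‖²)`:
`E[exp(φ(⟨u,w⟩⟨u,v⟩ − ⟨w,v⟩))] ≤ exp(4φ²‖w‖²)`.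
This verifies sub-exponential Assumption 3 for the linear regression model with
`α₂ = √8`, `ρ₂ = 8` (taking `w = θ − θ*`). -/
theorem gaussian_quadratic_mgf
    (d : ℕ)
    (Ω : Type*) [MeasurableSpace Ω] (P : Measure Ω) [IsProbabilityMeasure P]
    (u : Ω → EuclideanSpace ℝ (Fin d)) (humeas : Measurable u)
    (hucoord : ∀ i : Fin d, Measure.map (fun ω => u ω i) P = gaussianReal 0 1)
    (huindep : iIndepFun (fun i ω => u ω i) P)
    (v w : EuclideanSpace ℝ (Fin d)) (hv : ‖v‖ = 1) (hw : w ≠ 0)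
    (φ : ℝ) (hφ : φ ^ 2 ≤ 1 / (64 * ‖w‖ ^ 2)) :
    ∫ ω, Real.exp (φ * (⟪u ω, w⟫ * ⟪u ω, v⟫ - ⟪w, v⟫)) ∂P
      ≤ Real.exp (4 * φ ^ 2 * ‖w‖ ^ 2) := by
  have hφw : |φ| * ‖w‖ ≤ 1 / 4 := by
    rw [le_div_iff₀ (by positivity)] at hφ
    refine (pow_le_pow_iff_left₀ (by positivity) (by norm_num) two_ne_zero).mp ?_
    rw [mul_pow, sq_abs]
    linarith
  calc ∫ ω, exp (φ * (⟪u ω, w⟫ * ⟪u ω, v⟫ - ⟪w, v⟫)) ∂P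
      = ∫ x, exp (φ * (⟪x, w⟫ * ⟪x, v⟫ - ⟪w, v⟫)) ∂stdGaussian (EuclideanSpace ℝ (Fin d)) :=
        (hasLaw_stdGaussian_of_iIndepFun humeas hucoord huindep).integral_comp
          (f := fun x ↦ exp (φ * (⟪x, w⟫ * ⟪x, v⟫ - ⟪w, v⟫))) (by fun_prop)
    _ ≤ exp (4 * φ ^ 2 * ‖w‖ ^ 2) := integral_exp_mul_inner_mul_inner_sub_stdGaussian_le hv hw hφw
end
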